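/- arXiv:1903.07003 — 4 statements merged into one kernel-verified Lean document; each statement's English description precedes it below -/
import Mathlib

section
/- From any state in the sampled safe set SS, the system is N-step controllable to the target set P ∪ SS for every N ≥ 1; more precisely, for every x ∈ SS and every N ≥ 1 there exists an admissible input sequence of length N such that all intermediate states satisfy the state constraints and the final state lies in SS ∪ P. -/
/-- Auxiliary: from any point of a control invariant set `P` there is an
infinite admissible trajectory staying in `P`. -/
lemma stay_in_invariant {σ ι : Type*} (f : σ → ι → σ) (U : Set ι) (P : Set σ)
    (hP : ∀ x ∈ P, ∃ u ∈ U, f x u ∈ P) (x0 : σ) (hx0 : x0 ∈ P) :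
    ∃ z : ℕ → σ, ∃ w : ℕ → ι, z 0 = x0 ∧
      ∀ n, z n ∈ P ∧ w n ∈ U ∧ z (n + 1) = f (z n) (w n) := by
  classical
  choose g hgU hgP using hP
  let zp : ℕ → {x // x ∈ P} := fun n =>
    Nat.rec ⟨x0, hx0⟩ (fun _ p => ⟨f p.1 (g p.1 p.2), hgP p.1 p.2⟩) n
  refine ⟨fun n => (zp n).1, fun n => g (zp n).1 (zp n).2, rfl, fun n => ⟨(zp n).2, hgU _ _, rfl⟩⟩

/-- From any state of the sampled safe set `SS`, the system is
`N`-step controllable to `SS ∪ P` for every `N ≥ 1`: there is an admissible input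
sequence of length `N` such that all intermediate states satisfy the state
constraints and the final state lies in `SS ∪ P`. -/
theorem sampled_safe_set_N_step_controllable
    {σ ι : Type*} (f : σ → ι → σ) (X : Set σ) (U : Set ι) (P : Set σ)
    (hPX : P ⊆ X)
    (hP : ∀ x ∈ P, ∃ u ∈ U, f x u ∈ P)
    (J : ℕ) (T : Fin J → ℕ) (xs : Fin J → ℕ → σ) (us : Fin J → ℕ → ι)
    (hX : ∀ j, ∀ k ≤ T j, xs j k ∈ X)
    (hU : ∀ j, ∀ k < T j, us j k ∈ U)
    (hdyn : ∀ j, ∀ k < T j, xs j (k + 1) = f (xs j k) (us j k))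
    (hterm : ∀ j, xs j (T j) ∈ P)
    (SS : Set σ) (hSS : SS = {x | ∃ j, ∃ k ≤ T j, x = xs j k}) :
    ∀ x ∈ SS, ∀ N : ℕ, 1 ≤ N →
      ∃ u : ℕ → ι, (∀ k < N, u k ∈ U) ∧
        ∃ y : ℕ → σ, y 0 = x ∧ (∀ k < N, y (k + 1) = f (y k) (u k)) ∧
          (∀ k ≤ N, y k ∈ X) ∧ y N ∈ SS ∪ P := by
  classical
  intro x hx N _
  rw [hSS] at hx
  obtain ⟨j, k, hk, rfl⟩ := hx
  obtain ⟨z, w, hz0, hzw⟩ := stay_in_invariant f U P hP (xs j (T j)) (hterm j)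
  refine ⟨fun n => if k + n < T j then us j (k + n) else w (k + n - T j), ?_,
    fun n => if k + n ≤ T j then xs j (k + n) else z (k + n - T j), ?_, ?_, ?_, ?_⟩
  · intro n _
    by_cases h : k + n < T j
    · simpa [h] using hU j (k + n) h
    · simpa [h] using (hzw (k + n - T j)).2.1
  · simp [hk]
  · intro n _
    rcases lt_trichotomy (k + n) (T j) with h | h | h
    · have h1 : k + n + 1 ≤ T j := h
      simp only [show k + (n + 1) = k + n + 1 by ring]
      rw [if_pos h1, if_pos (le_of_lt h), if_pos h]
      exact hdyn j (k + n) h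
    · have h1 : ¬ k + n + 1 ≤ T j := by omega
      have h2 : ¬ k + n < T j := by omega
      simp only [show k + (n + 1) = k + n + 1 by ring]
      rw [if_neg h1, if_pos (le_of_eq h), if_neg h2]
      have e1 : k + n + 1 - T j = 1 := by omega
      have e2 : k + n - T j = 0 := by omega
      rw [e1, e2, h]
      have := (hzw 0).2.2
      rw [this, hz0]
    · have h1 : ¬ k + n + 1 ≤ T j := by omega
      have h2 : ¬ k + n ≤ T j := by omega
      have h3 : ¬ k + n < T j := by omega
      simp only [show k + (n + 1) = k + n + 1 by ring]
      rw [if_neg h1, if_neg h2, if_neg h3]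
      have e1 : k + n + 1 - T j = (k + n - T j) + 1 := by omega
      rw [e1]
      exact (hzw (k + n - T j)).2.2
  · intro n _
    by_cases h : k + n ≤ T j
    · simpa [h] using hX j (k + n) h
    · simp only [if_neg h]
      exact hPX (hzw (k + n - T j)).1
  · by_cases h : k + N ≤ T j
    · left
      rw [hSS]
      exact ⟨j, k + N, h, by simp [h]⟩
    · right
      simp only [if_neg h]
      exact (hzw (k + N - T j)).1
end

section
/- Recursive feasibility of the safe-set MPC: if at time k the optimization problem minimizing the N-step cost subject to dynamics, constraints, initial condition x_k, and terminal constraint x_{k+N} ∈ SS ∪ P is feasible, and the first optimal input is applied, then the problem at time k+1 with initial condition x_{k+1} = f(x_k, u*_k) is also feasible. -/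
/-- Recursive feasibility of safe-set MPC: if the `N`-step problem with
initial condition `xk` and terminal constraint in `SS ∪ P` is feasible, and the first
optimal (here: any feasible) input is applied, then the problem at the successor state
`f xk (u 0)` is also feasible. -/
theorem mpc_recursive_feasibility
    {σ ι : Type*} (f : σ → ι → σ) (X : Set σ) (U : Set ι) (P : Set σ) (SS : Set σ)
    (N : ℕ) (hN : 1 ≤ N)
    (hSS : ∀ x ∈ SS, ∃ u ∈ U, f x u ∈ SS ∪ P)
    (hP : ∀ x ∈ P, ∃ u ∈ U, f x u ∈ P)
    (hSP : SS ∪ P ⊆ X)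
    (xk : σ) (u : ℕ → ι) (x : ℕ → σ)
    (hfeas : x 0 = xk ∧ (∀ t < N, u t ∈ U) ∧ (∀ t < N, x (t + 1) = f (x t) (u t)) ∧
      (∀ t ≤ N, x t ∈ X) ∧ x N ∈ SS ∪ P) :
    ∃ u' : ℕ → ι, ∃ x' : ℕ → σ,
      x' 0 = f xk (u 0) ∧ (∀ t < N, u' t ∈ U) ∧
      (∀ t < N, x' (t + 1) = f (x' t) (u' t)) ∧
      (∀ t ≤ N, x' t ∈ X) ∧ x' N ∈ SS ∪ P := by
  obtain ⟨h0, hU, hdyn, hX, hterm⟩ := hfeas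
  -- terminal input keeping us in SS ∪ P
  have hN' : ∃ uN ∈ U, f (x N) uN ∈ SS ∪ P := by
    rcases hterm with h | h
    · exact hSS _ h
    · obtain ⟨uN, huN, hf⟩ := hP _ h
      exact ⟨uN, huN, Or.inr hf⟩
  obtain ⟨uN, huN, hfN⟩ := hN'
  refine ⟨fun t => if t + 1 < N then u (t + 1) else uN,
          fun t => if t < N then x (t + 1) else f (x N) uN, ?_, ?_, ?_, ?_, ?_⟩
  · simp only [hN, if_pos (Nat.lt_of_lt_of_le Nat.zero_lt_one hN)]
    rw [hdyn 0 hN, h0]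
  · intro t ht
    by_cases h : t + 1 < N
    · simpa [h] using hU (t + 1) h
    · simpa [h] using huN
  · intro t ht
    by_cases h : t + 1 < N
    · simp only [ht, h, if_pos]
      exact hdyn (t + 1) h
    · have htN : t + 1 = N := le_antisymm ht (not_lt.mp h)
      simp [ht, h, htN]
  · intro t ht
    by_cases h : t < N
    · simp only [h, if_pos]
      exact hX (t + 1) h
    · simp only [h, if_neg, if_false]
      exact hSP hfN
  · have : ¬ N < N := lt_irrefl N
    simp only [this, if_neg, if_false]
    exact hfN
end

section
/- Safe set growth preserves and improves the MPC value: if SS ⊆ SS' and the stored cost-to-go function on SS' restricted to SS is less than or equal to the one on SS, then for every state x the optimal value of the MPC problem with terminal set SS' ∪ P is less than or equal to the optimal value with terminal set SS ∪ P; in particular feasibility is preserved under enlargement of the safe set. -/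
/-- Safe set growth preserves and improves the MPC value: if
`SS ⊆ SS'` and the stored cost-to-go `Q'` on `SS'` satisfies `Q' ≤ Q` on `SS`
(with both vanishing on `P`), then the optimal value of the MPC problem with
terminal set `SS' ∪ P` (and terminal cost `Q'`) is at most the optimal value with
terminal set `SS ∪ P` (and terminal cost `Q`); in particular feasibility is
preserved under enlargement of the safe set. -/
theorem safe_set_growth_improves_mpc_value
    {σ ι : Type*} (f : σ → ι → σ) (X : Set σ) (U : Set ι) (P : Set σ)
    (SS SS' : Set σ) (hsub : SS ⊆ SS')
    (h : σ → ι → ℝ) (Q Q' : σ → ℝ)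
    (hQ : ∀ y ∈ SS, Q' y ≤ Q y)
    (hQP : ∀ y ∈ P, Q y = 0 ∧ Q' y = 0)
    (N : ℕ) (x : σ) (C C' : Set ℝ)
    (hC : C = {c | ∃ (xs : ℕ → σ) (us : ℕ → ι), xs 0 = x ∧
      (∀ t < N, us t ∈ U ∧ xs (t + 1) = f (xs t) (us t) ∧ xs t ∈ X) ∧
      xs N ∈ SS ∪ P ∧
      c = (∑ t ∈ Finset.range N, h (xs t) (us t)) + Q (xs N)})
    (hC' : C' = {c | ∃ (xs : ℕ → σ) (us : ℕ → ι), xs 0 = x ∧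
      (∀ t < N, us t ∈ U ∧ xs (t + 1) = f (xs t) (us t) ∧ xs t ∈ X) ∧
      xs N ∈ SS' ∪ P ∧
      c = (∑ t ∈ Finset.range N, h (xs t) (us t)) + Q' (xs N)})
    (hbdd : BddBelow C') :
    (C.Nonempty → C'.Nonempty) ∧ (C.Nonempty → sInf C' ≤ sInf C) := by
  have key : ∀ c ∈ C, ∃ c' ∈ C', c' ≤ c := by
    intro c hc
    rw [hC] at hc
    obtain ⟨xs, us, h0, hdyn, hterm, hcost⟩ := hc
    refine ⟨(∑ t ∈ Finset.range N, h (xs t) (us t)) + Q' (xs N), ?_, ?_⟩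
    · rw [hC']
      exact ⟨xs, us, h0, hdyn, hterm.imp (fun hx => hsub hx) id, rfl⟩
    · rw [hcost]
      gcongr
      rcases hterm with hx | hx
      · exact hQ _ hx
      · rw [(hQP _ hx).1, (hQP _ hx).2]
  constructor
  · rintro ⟨c, hc⟩
    obtain ⟨c', hc', _⟩ := key c hc
    exact ⟨c', hc'⟩
  · intro hne
    refine le_csInf hne fun c hc => ?_
    obtain ⟨c', hc', hle⟩ := key c hc
    exact (csInf_le hbdd hc').trans hle
end

section
/- Removal soundness in the TDMPC algorithm: if from the sampled guard state x of subtask S_i no admissible one-step transition exists into any verified stored state of the next subtask (i.e., the controllability problem is infeasible for all verified trajectories), then removing the stored execution through S_i ending at x preserves the invariant that every state remaining in the constructed safe set admits an admissible input sequence, using stored inputs and one-step connections, reaching the Task 2 target set R. -/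
/-- `Reach f U R S z`: from `z` there is an admissible input sequence whose states
remain in `S` until reaching the target set `R`. -/
def Reach {σ ι : Type*} (f : σ → ι → σ) (U : Set ι) (R S : Set σ) (z : σ) : Prop :=
  ∃ (T : ℕ) (x : ℕ → σ) (u : ℕ → ι), x 0 = z ∧
    (∀ k < T, u k ∈ U ∧ x (k + 1) = f (x k) (u k) ∧ x k ∈ S) ∧ x T ∈ R

lemma Reach.mono {σ ι : Type*} {f : σ → ι → σ} {U : Set ι} {R S S' : Set σ} {z : σ}
    (h : Reach f U R S z) (hSS : S ⊆ S') : Reach f U R S' z := by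
  obtain ⟨T, x, u, h0, hstep, hR⟩ := h
  exact ⟨T, x, u, h0, fun k hk => ⟨(hstep k hk).1, (hstep k hk).2.1, hSS (hstep k hk).2.2⟩, hR⟩

/-- Removal soundness in the TDMPC algorithm. Let `Verified` be the
already-verified safe set (every state of it reaches the Task 2 target `R` through
`Verified`). Let a family of kept stored executions through subtask `S_i` be given,
each obeying the dynamics with admissible inputs and whose final (guard) state
admits a one-step admissible connection into `Verified`. Suppose the guard state
`xg` of some other stored execution has no admissible one-step transition into
`Verified` (the controllability problem is infeasible), so that execution is
removed. Then the constructed safe set — `Verified` together with the states of the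
kept executions only — still satisfies the invariant: every state in it reaches `R`
via admissible inputs through states of the safe set. -/
theorem tdmpc_removal_soundness
    {σ ι K : Type*} (f : σ → ι → σ) (U : Set ι) (R : Set σ)
    (Verified : Set σ)
    (hVer : ∀ z ∈ Verified, Reach f U R Verified z)
    (T : K → ℕ) (xs : K → ℕ → σ) (us : K → ℕ → ι)
    (hdyn : ∀ k : K, ∀ t < T k, xs k (t + 1) = f (xs k t) (us k t))
    (hU : ∀ k : K, ∀ t < T k, us k t ∈ U)
    (hconn : ∀ k : K, ∃ u ∈ U, f (xs k (T k)) u ∈ Verified)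
    (xg : σ) (hfail : ∀ u ∈ U, f xg u ∉ Verified)
    (S : Set σ)
    (hS : S = Verified ∪ {z | ∃ k : K, ∃ t ≤ T k, z = xs k t}) :
    ∀ z ∈ S, Reach f U R S z := by
  intro z hz
  have hVS : Verified ⊆ S := by rw [hS]; exact Set.subset_union_left
  rw [hS] at hz
  rcases hz with hz | ⟨k, t, ht, rfl⟩
  · exact (hVer z hz).mono hVS
  · obtain ⟨u0, hu0, hy⟩ := hconn k
    obtain ⟨T', x', u', h0', hstep', hR'⟩ := hVer _ hy
    set n := T k - t with hn
    have htn : t + n = T k := by omega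
    refine ⟨n + 1 + T',
      (fun j => if j ≤ n then xs k (t + j) else x' (j - (n + 1))),
      (fun j => if j < n then us k (t + j) else if j = n then u0 else u' (j - (n + 1))),
      by simp, ?_, ?_⟩
    · intro j hj
      rcases lt_trichotomy j n with hjn | rfl | hjn
      · have h1 : t + j < T k := by omega
        refine ⟨by simpa [hjn] using hU k _ h1, ?_, ?_⟩
        · simp only [if_pos hjn, if_pos (le_of_lt hjn), if_pos (by omega : j + 1 ≤ n)]
          rw [show t + (j + 1) = t + j + 1 by omega]
          exact hdyn k _ h1
        · simp only [if_pos (le_of_lt hjn)]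
          rw [hS]; right; exact ⟨k, t + j, by omega, rfl⟩
      · refine ⟨by simp [hu0, lt_irrefl], ?_, ?_⟩
        · simp only [lt_irrefl, if_neg (lt_irrefl n), if_pos rfl, if_pos (le_refl n),
            if_neg (by omega : ¬ n + 1 ≤ n)]
          rw [show n + 1 - (n + 1) = 0 by omega, h0', htn]
          simp
        · simp only [if_pos (le_refl n)]
          rw [hS]; right; exact ⟨k, t + n, by omega, rfl⟩
      · have hm : j - (n + 1) < T' := by omega
        obtain ⟨hu', hx', hS'⟩ := hstep' _ hm
        refine ⟨by simp [if_neg (by omega : ¬ j < n), if_neg (by omega : j ≠ n), hu'], ?_, ?_⟩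
        · simp only [if_neg (by omega : ¬ j ≤ n), if_neg (by omega : ¬ j + 1 ≤ n),
            if_neg (by omega : ¬ j < n), if_neg (by omega : j ≠ n)]
          rw [show j + 1 - (n + 1) = j - (n + 1) + 1 by omega, hx']
        · simp only [if_neg (by omega : ¬ j ≤ n)]
          exact hVS hS'
    · simp only [if_neg (by omega : ¬ n + 1 + T' ≤ n)]
      rw [show n + 1 + T' - (n + 1) = T' by omega]
      exact hR'
end
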